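/- If signatures are unforgeable in the symbolic model (a signature sign(m, k) is derivable only if the adversary knows both m and the signing key k, or observed the signature itself), and the authenticator's signing key is never revealed, then every signature sign(m, authKey) in the adversary's knowledge was output by the authenticator. -/

import Mathlib

abbrev Key := ℕ

/-- Symbolic message algebra extended with signatures `sign m k`. -/
inductive Msg where
  | atom : ℕ → Msg
  | pair : Msg → Msg → Msg
  | aenc : Msg → Key → Msg
  | pk : Key → Msg
  | sk : Key → Msg
  | sign : Msg → Key → Msg
deriving DecidableEq

/-- Dolev-Yao deduction: `sign m k` can be constructed only from knowledge of `m` and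
the signing key `sk k`; a signature can be verified and its payload read, but the
signing key cannot be extracted from it. -/
inductive Knows : Set Msg → Msg → Prop where
  | mem {S m} : m ∈ S → Knows S m
  | pair_intro {S m n} : Knows S m → Knows S n → Knows S (Msg.pair m n)
  | fst {S m n} : Knows S (Msg.pair m n) → Knows S m
  | snd {S m n} : Knows S (Msg.pair m n) → Knows S n
  | aenc_intro {S m k} : Knows S m → Knows S (Msg.pk k) → Knows S (Msg.aenc m k)
  | adec {S m k} : Knows S (Msg.aenc m k) → Knows S (Msg.sk k) → Knows S m
  | sign_intro {S m k} : Knows S m → Knows S (Msg.sk k) → Knows S (Msg.sign m k)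
  | sign_payload {S m k} : Knows S (Msg.sign m k) → Knows S m

/-- Subterm relation on symbolic messages. -/
inductive Subterm : Msg → Msg → Prop where
  | refl (m) : Subterm m m
  | pair_left {m a b} : Subterm m a → Subterm m (Msg.pair a b)
  | pair_right {m a b} : Subterm m b → Subterm m (Msg.pair a b)
  | aenc {m a k} : Subterm m a → Subterm m (Msg.aenc a k)
  | sign {m a k} : Subterm m a → Subterm m (Msg.sign a k)

/-- Only `sign_intro` creates a new signature under `k`, and it needs `sk k`. -/
theorem Knows.exists_mem_subterm_of_not_knows_sk {S : Set Msg} {k : Key} {m t : Msg}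
    (hkey : ¬ Knows S (Msg.sk k)) (ht : Knows S t) (hsub : Subterm (Msg.sign m k) t) :
    ∃ x ∈ S, Subterm (Msg.sign m k) x := by
  induction ht generalizing m with
  | mem hx => exact ⟨_, hx, hsub⟩
  | pair_intro _ _ ih₁ ih₂ =>
    cases hsub with
    | pair_left h => exact ih₁ h
    | pair_right h => exact ih₂ h
  | fst _ ih => exact ih (.pair_left hsub)
  | snd _ ih => exact ih (.pair_right hsub)
  | aenc_intro _ _ ih _ =>
    cases hsub with
    | aenc h => exact ih h
  | adec _ _ ih _ => exact ih (.aenc hsub)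
  | sign_intro _ hsk ih _ =>
    cases hsub with
    | refl => exact absurd hsk hkey
    | sign h => exact ih h
  | sign_payload _ ih => exact ih (.sign hsub)

theorem signatures_unforgeable_general
    (S O : Set Msg) (authKey : Key) (m : Msg)
    -- signatures under `authKey` occur in S only as top-level messages (elements of O)
    (htop : ∀ x ∈ S, ∀ m', Subterm (Msg.sign m' authKey) x →
      x = Msg.sign m' authKey ∧ x ∈ O)
    -- the authenticator's signing key is never revealed
    (hkey : ¬ Knows S (Msg.sk authKey))
    (h : Knows S (Msg.sign m authKey)) :
    Msg.sign m authKey ∈ S := by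
  obtain ⟨x, hxS, hsub⟩ := h.exists_mem_subterm_of_not_knows_sk hkey (.refl _)
  obtain ⟨rfl, -⟩ := htop x hxS m hsub
  exact hxS

/-- **Unforgeability of authenticator signatures.** Let `S` be the adversary knowledge
set, containing the set `O` of signatures actually output by the honest authenticator
plus other messages in which signatures under `authKey` never occur as accessible
subterms except at top level. If the authenticator's signing key is never revealed
(`sk authKey` is not derivable from `S`), then every signature `sign m authKey` the
adversary knows was output by the authenticator, i.e. it is an observed element of `S`
(in fact of `O`) and not a forgery. -/
theorem signatures_unforgeable
    (S O : Set Msg) (authKey : Key) (m : Msg)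
    (hO : O ⊆ S)
    (hOsig : ∀ x ∈ O, ∃ m', x = Msg.sign m' authKey)
    -- signatures under `authKey` occur in S only as top-level messages (elements of O)
    (htop : ∀ x ∈ S, ∀ m', Subterm (Msg.sign m' authKey) x →
      x = Msg.sign m' authKey ∧ x ∈ O)
    -- the authenticator's signing key is never revealed
    (hkey : ¬ Knows S (Msg.sk authKey))
    (h : Knows S (Msg.sign m authKey)) :
    Msg.sign m authKey ∈ S :=
  signatures_unforgeable_general S O authKey m htop hkey h
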